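/- arXiv:1103.0191 — 3 statements merged into one kernel-verified Lean document; each statement's English description precedes it below -/
import Mathlib

section
/- Suppose u : ℝ³ → ℝ is a positive continuous function such that for every x ∈ ℝ³ and every λ > 0, u(y) ≥ (λ/|y - x|) u(x + λ²(y - x)/|y - x|²) for all y with |y - x| ≥ λ. Then u is constant. -/
/-!
For `y ≠ z` and `0 < r < 1` pick the centre `x` on the line through `y` and `z` with
`x + r² (y - x) = z`, and take `λ = r ‖y - x‖`. The inversion in the sphere `∂B(x, λ)` then
sends `y` to `z`, so the hypothesis reads `r u(z) ≤ u(y)`; letting `r → 1` gives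
`u(z) ≤ u(y)` for all `y, z`.
-/

open Filter Topology

theorem le_of_forall_pos_lt_one_mul_le {a b : ℝ} (h : ∀ r, 0 < r → r < 1 → r * a ≤ b) :
    a ≤ b := by
  have hlim : Tendsto (fun r : ℝ => r * a) (𝓝[<] 1) (𝓝 a) :=
    ((continuous_mul_const a).tendsto' 1 a (one_mul a)).mono_left nhdsWithin_le_nhds
  refine le_of_tendsto hlim ?_
  filter_upwards [Ioo_mem_nhdsLT zero_lt_one] with r ⟨hr0, hr1⟩ using h r hr0 hr1

theorem exists_add_smul_sub_eq {𝕜 V : Type*} [Field 𝕜] [AddCommGroup V] [Module 𝕜 V]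
    {c : 𝕜} (hc : c ≠ 1) (y z : V) : ∃ x, x + c • (y - x) = z :=
  ⟨(1 - c)⁻¹ • (z - c • y), by
    calc (1 - c)⁻¹ • (z - c • y) + c • (y - (1 - c)⁻¹ • (z - c • y))
        = (1 - c) • (1 - c)⁻¹ • (z - c • y) + c • y := by module
      _ = z := by
        rw [smul_smul, mul_inv_cancel₀ (sub_ne_zero.mpr hc.symm), one_smul, sub_add_cancel]⟩

section

variable {E : Type*} [NormedAddCommGroup E] [NormedSpace ℝ E]

theorem mul_le_of_forall_kelvin_le {u : E → ℝ}
    (hdom : ∀ (x : E) (lam : ℝ), 0 < lam → ∀ y : E, lam ≤ ‖y - x‖ →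
      (lam / ‖y - x‖) * u (x + (lam ^ 2 / ‖y - x‖ ^ 2) • (y - x)) ≤ u y)
    {y z : E} (hyz : y ≠ z) {r : ℝ} (hr0 : 0 < r) (hr1 : r < 1) : r * u z ≤ u y := by
  obtain ⟨x, hx⟩ := exists_add_smul_sub_eq (c := r ^ 2) (by nlinarith) y z
  have hyx : 0 < ‖y - x‖ :=
    norm_pos_iff.mpr <| sub_ne_zero.mpr fun h => hyz (by simpa [h] using hx)
  have := hdom x (r * ‖y - x‖) (by positivity) y (by nlinarith)
  rwa [mul_div_cancel_right₀ _ hyx.ne', mul_pow, mul_div_cancel_right₀ _ (by positivity),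
    hx] at this

theorem le_of_forall_kelvin_le {u : E → ℝ}
    (hdom : ∀ (x : E) (lam : ℝ), 0 < lam → ∀ y : E, lam ≤ ‖y - x‖ →
      (lam / ‖y - x‖) * u (x + (lam ^ 2 / ‖y - x‖ ^ 2) • (y - x)) ≤ u y)
    (y z : E) : u z ≤ u y := by
  rcases eq_or_ne y z with rfl | hyz
  · exact le_rfl
  · exact le_of_forall_pos_lt_one_mul_le fun r hr0 hr1 =>
      mul_le_of_forall_kelvin_le hdom hyz hr0 hr1

end

theorem dominating_all_kelvin_transforms_implies_constant_general
    (u : EuclideanSpace ℝ (Fin 3) → ℝ)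
    (hdom : ∀ (x : EuclideanSpace ℝ (Fin 3)) (lam : ℝ), 0 < lam →
      ∀ y : EuclideanSpace ℝ (Fin 3), lam ≤ ‖y - x‖ →
        (lam / ‖y - x‖) * u (x + (lam ^ 2 / ‖y - x‖ ^ 2) • (y - x)) ≤ u y) :
    ∃ c : ℝ, ∀ y, u y = c :=
  ⟨u 0, fun y => le_antisymm (le_of_forall_kelvin_le hdom 0 y) (le_of_forall_kelvin_le hdom y 0)⟩

/-- a positive continuous function on `ℝ³` dominating all its
Kelvin transforms `u^{λ,x}` outside the corresponding balls is constant. -/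
theorem dominating_all_kelvin_transforms_implies_constant
    (u : EuclideanSpace ℝ (Fin 3) → ℝ)
    (hu_pos : ∀ x, 0 < u x) (hu_cont : Continuous u)
    (hdom : ∀ (x : EuclideanSpace ℝ (Fin 3)) (lam : ℝ), 0 < lam →
      ∀ y : EuclideanSpace ℝ (Fin 3), lam ≤ ‖y - x‖ →
        (lam / ‖y - x‖) * u (x + (lam ^ 2 / ‖y - x‖ ^ 2) • (y - x)) ≤ u y) :
    ∃ c : ℝ, ∀ y, u y = c :=
  dominating_all_kelvin_transforms_implies_constant_general u hdom
end

section
/- Let (M, g) be a compact Riemannian 3-manifold, ε > 0, and let u > 0 be a smooth solution of Δ_g u + ε u = V u⁵ on M, where V is continuous with a ≤ V ≤ b for constants 0 < a ≤ b. Then min_M u ≤ (ε/a)^{1/4}. -/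
/-- on a compact manifold (modelled by a compact topological space
`M` with an operator `L` standing for the Laplace–Beltrami operator `Δ_g`, with
the sign convention `L f ≤ 0` at a minimum point), a positive solution of
`Δ_g u + ε u = V u⁵` with `a ≤ V ≤ b` satisfies `min_M u ≤ (ε/a)^{1/4}`. -/
theorem min_le_of_scalar_curvature_eq
    (M : Type*) [TopologicalSpace M] [CompactSpace M] [Nonempty M]
    (L : (M → ℝ) → M → ℝ)
    (hL_min : ∀ (f : M → ℝ) (x : M), Continuous f → IsMinOn f Set.univ x →
      L f x ≤ 0)
    (ε a b : ℝ) (hε : 0 < ε) (ha : 0 < a) (hab : a ≤ b)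
    (V u : M → ℝ) (hV : Continuous V)
    (hVa : ∀ x, a ≤ V x) (hVb : ∀ x, V x ≤ b)
    (hu : Continuous u) (hu_pos : ∀ x, 0 < u x)
    (heq : ∀ x, L u x + ε * u x = V x * u x ^ 5) :
    sInf (Set.range u) ≤ (ε / a) ^ ((1 : ℝ) / 4) := by
  obtain ⟨x₀, -, hmin⟩ := isCompact_univ.exists_isMinOn Set.univ_nonempty hu.continuousOn
  have hL : L u x₀ ≤ 0 := hL_min u x₀ hu hmin
  have h1 : V x₀ * u x₀ ^ 5 ≤ ε * u x₀ := by
    have := heq x₀; nlinarith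
  have hpos := hu_pos x₀
  have h2 : a * u x₀ ^ 4 ≤ ε := by
    have h3 : a * u x₀ ^ 5 ≤ V x₀ * u x₀ ^ 5 := by
      have := hVa x₀; nlinarith [pow_pos hpos 5]
    nlinarith [pow_pos hpos 4]
  have h4 : u x₀ ^ (4 : ℕ) ≤ ε / a := (le_div_iff₀' ha).mpr h2
  have h5 : u x₀ ≤ (ε / a) ^ ((1 : ℝ) / 4) := by
    have := Real.rpow_le_rpow (by positivity) h4 (by norm_num : (0:ℝ) ≤ 1/4)
    rwa [← Real.rpow_natCast (u x₀) 4, ← Real.rpow_mul hpos.le,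
      (by norm_num : ((4 : ℕ) : ℝ) * (1/4) = 1), Real.rpow_one] at this
  refine le_trans (csInf_le ⟨0, ?_⟩ ⟨x₀, rfl⟩) h5
  rintro y ⟨x, rfl⟩; exact (hu_pos x).le
end

section
/- Let v : ℝ³ → ℝ be C¹ and positive, and suppose in polar coordinates f(r, θ) = √r v(rθ) (θ ∈ S², r > 0) satisfies ∂f/∂r(r, θ) > C r^{-1/2} for all 0 < r < r₀ and all θ. Then for all 0 < λ < |y| < r₀, one has v(y) - (λ/|y|) v(λ² y/|y|²) > (C/r₀)(|y| - λ). -/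
/-!
Along the ray through `y`, write `f(s) = √s · v(s θ)` with `θ = y / |y|`. Since the Kelvin
reflection `y ↦ λ² y / |y|²` stays on that ray, at radius `a = λ² / |y|`, one gets
`v(y) - v^λ(y) = (f(|y|) - f(a)) / √|y|`. On `(a, |y|)` the hypothesis gives
`f' > C r^{-1/2} ≥ C |y|^{-1/2}`, so the mean value theorem bounds the difference below by
`C (|y| - a) / |y| ≥ (C / r₀) (|y| - λ)`, as `a < λ` and `|y| < r₀`.
-/

open Real Set

noncomputable section

variable {E : Type*} [NormedAddCommGroup E] [NormedSpace ℝ E]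

def sqrtRadialProfile (v : E → ℝ) (θ : E) (s : ℝ) : ℝ := √s * v (s • θ)

theorem sqrtRadialProfile_differentiableAt {v : E → ℝ} (hv : Differentiable ℝ v) (θ : E)
    {s : ℝ} (hs : s ≠ 0) : DifferentiableAt ℝ (sqrtRadialProfile v θ) s :=
  (hasDerivAt_sqrt hs).differentiableAt.mul
    ((hv _).comp s (differentiableAt_id.smul_const θ))

theorem sqrtRadialProfile_continuous {v : E → ℝ} (hv : Continuous v) (θ : E) :
    Continuous (sqrtRadialProfile v θ) :=
  continuous_sqrt.mul (hv.comp (continuous_id.smul continuous_const))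

theorem sub_kelvin_eq_sqrtRadialProfile_sub (v : E → ℝ) {y : E} (hy : y ≠ 0) {lam : ℝ}
    (hlam : 0 ≤ lam) :
    v y - lam / ‖y‖ * v ((lam ^ 2 / ‖y‖ ^ 2) • y) =
      (sqrtRadialProfile v (‖y‖⁻¹ • y) ‖y‖ - sqrtRadialProfile v (‖y‖⁻¹ • y) (lam ^ 2 / ‖y‖))
        / √‖y‖ := by
  have hb : 0 < ‖y‖ := norm_pos_iff.mpr hy
  have hsb : 0 < √‖y‖ := sqrt_pos.mpr hb
  have hsqrt_kelvin : √(lam ^ 2 / ‖y‖) = lam / √‖y‖ := by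
    rw [sqrt_div (sq_nonneg lam), sqrt_sq hlam]
  have hkelvin_scale : lam ^ 2 / ‖y‖ * ‖y‖⁻¹ = lam ^ 2 / ‖y‖ ^ 2 := by ring
  simp only [sqrtRadialProfile, smul_smul, mul_inv_cancel₀ hb.ne', one_smul, hsqrt_kelvin,
    hkelvin_scale]
  rw [eq_div_iff hsb.ne']
  field_simp
  rw [sq_sqrt hb.le]
  ring

theorem mul_sub_div_sqrt_lt_sub_of_lt_deriv {g : ℝ → ℝ} {K a b : ℝ} (hK : 0 ≤ K) (ha : 0 < a)
    (hab : a < b) (hg : ContinuousOn g (Icc a b)) (hg' : DifferentiableOn ℝ g (Ioo a b))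
    (hderiv : ∀ r ∈ Ioo a b, K * r ^ (-(1 : ℝ) / 2) < deriv g r) :
    K * (b - a) / √b < g b - g a := by
  have hbound : ∀ r ∈ interior (Icc a b), K / √b < deriv g r := by
    rw [interior_Icc]
    intro r hr
    refine lt_of_le_of_lt ?_ (hderiv r hr)
    have hr0 : 0 < r := ha.trans hr.1
    rw [rpow_div_two_eq_sqrt _ hr0.le, rpow_neg_one, div_eq_mul_inv]
    gcongr
    exact hr.2.le
  have := (convex_Icc a b).mul_sub_lt_image_sub_of_lt_deriv hg (by rwa [interior_Icc]) hbound
    a (left_mem_Icc.mpr hab.le) b (right_mem_Icc.mpr hab.le) hab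
  rwa [div_mul_eq_mul_div] at this

end

theorem kelvin_difference_lower_bound_general
    (v : EuclideanSpace ℝ (Fin 3) → ℝ)
    (hv : ContDiff ℝ 1 v)
    (C r₀ : ℝ) (hC : 0 < C) (hr₀ : 0 < r₀)
    (hderiv : ∀ θ : EuclideanSpace ℝ (Fin 3), ‖θ‖ = 1 →
      ∀ r : ℝ, 0 < r → r < r₀ →
        C * r ^ (-(1 : ℝ) / 2) < deriv (fun s : ℝ => Real.sqrt s * v (s • θ)) r)
    (lam : ℝ) (hlam : 0 < lam)
    (y : EuclideanSpace ℝ (Fin 3)) (hy₁ : lam < ‖y‖) (hy₂ : ‖y‖ < r₀) :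
    (C / r₀) * (‖y‖ - lam)
      < v y - (lam / ‖y‖) * v ((lam ^ 2 / ‖y‖ ^ 2) • y) := by
  have hb : 0 < ‖y‖ := hlam.trans hy₁
  have hy : y ≠ 0 := norm_pos_iff.mp hb
  set a := lam ^ 2 / ‖y‖
  have ha : 0 < a := by positivity
  have halam : a < lam := by rw [div_lt_iff₀ hb]; nlinarith
  have hmvt := mul_sub_div_sqrt_lt_sub_of_lt_deriv hC.le ha (halam.trans hy₁)
    (sqrtRadialProfile_continuous hv.continuous _).continuousOn
    (fun s hs => (sqrtRadialProfile_differentiableAt (hv.differentiable one_ne_zero) _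
      (ha.trans hs.1).ne').differentiableWithinAt)
    (fun r hr => hderiv _ (norm_smul_inv_norm (𝕜 := ℝ) hy) r (ha.trans hr.1) (hr.2.trans hy₂))
  rw [sub_kelvin_eq_sqrtRadialProfile_sub v hy hlam.le, lt_div_iff₀ (sqrt_pos.mpr hb)]
  refine lt_of_le_of_lt ?_ hmvt
  rw [le_div_iff₀ (sqrt_pos.mpr hb), mul_assoc, mul_self_sqrt hb.le]
  calc C / r₀ * (‖y‖ - lam) * ‖y‖ = C * (‖y‖ - lam) * (‖y‖ / r₀) := by ring
    _ ≤ C * (‖y‖ - a) * 1 := by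
      have hba : 0 ≤ ‖y‖ - a := by linarith
      gcongr
      exact (div_le_one hr₀).mpr hy₂.le
    _ = C * (‖y‖ - a) := mul_one _

/-- key computation (23) in Step 1 of Lemma 2.2. If
`f(r, θ) = √r v(rθ)` satisfies `∂f/∂r > C r^{-1/2}` for `0 < r < r₀`, then for
`0 < λ < |y| < r₀` one has `v(y) - v^λ(y) > (C/r₀)(|y| - λ)`, where `v^λ` is
the Kelvin transform of `v`. -/
theorem kelvin_difference_lower_bound
    (v : EuclideanSpace ℝ (Fin 3) → ℝ)
    (hv : ContDiff ℝ 1 v) (hv_pos : ∀ x, 0 < v x)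
    (C r₀ : ℝ) (hC : 0 < C) (hr₀ : 0 < r₀)
    (hderiv : ∀ θ : EuclideanSpace ℝ (Fin 3), ‖θ‖ = 1 →
      ∀ r : ℝ, 0 < r → r < r₀ →
        C * r ^ (-(1 : ℝ) / 2) < deriv (fun s : ℝ => Real.sqrt s * v (s • θ)) r)
    (lam : ℝ) (hlam : 0 < lam)
    (y : EuclideanSpace ℝ (Fin 3)) (hy₁ : lam < ‖y‖) (hy₂ : ‖y‖ < r₀) :
    (C / r₀) * (‖y‖ - lam)
      < v y - (lam / ‖y‖) * v ((lam ^ 2 / ‖y‖ ^ 2) • y) :=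
  kelvin_difference_lower_bound_general v hv C r₀ hC hr₀ hderiv lam hlam y hy₁ hy₂
end
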